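/- Let B ≥ 1 and n ∈ ℕ, and over the alphabet {a, b} let f = (b^B a^B a b)^n. Then for every word v over {a, b} with |v| = 2Bn: (v ⧢ f) ∩ (ab)^* ≠ ∅ if and only if v = (a^B b^B)^n. -/

import Mathlib

namespace CTS

/-- Shuffle of two words: `ε ⧢ v = {v}`, `u ⧢ ε = {u}`,
`(x·u) ⧢ (y·v) = x·(u ⧢ y·v) ∪ y·(x·u ⧢ v)`. -/
def shuffle {α : Type*} : List α → List α → Set (List α)
  | [], v => {v}
  | u, [] => {u}
  | x :: u, y :: v =>
      (List.cons x) '' shuffle u (y :: v) ∪ (List.cons y) '' shuffle (x :: u) v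
  termination_by u v => u.length + v.length

/-- Shuffle of a tuple of words: `⧢() = {ε}` and
`⧢(w₁, …, wₘ₊₁) = ⋃_{v ∈ ⧢(w₁, …, wₘ)} v ⧢ wₘ₊₁`. -/
def Shuffles {α : Type*} (ws : List (List α)) : Set (List α) :=
  ws.foldl (fun S w => ⋃ v ∈ S, shuffle v w) {[]}

/-- `wpow u n` is the `n`-fold concatenation `u^n` of the word `u`. -/
def wpow {α : Type*} (u : List α) : ℕ → List α
  | 0 => []
  | n + 1 => u ++ wpow u n

/-- `star u = {u^n : n ∈ ℕ}`. -/
def star {α : Type*} (u : List α) : Set (List α) := {w | ∃ n, w = wpow u n}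

/-- Words that are (possibly empty) concatenations of blocks from `S`. -/
def ConcatsOf {α : Type*} (S : Set (List α)) : Set (List α) :=
  {w | ∃ L : List (List α), (∀ u ∈ L, u ∈ S) ∧ w = L.flatten}

/-- The two-letter alphabet `{a, b}`. -/
inductive AB : Type
  | a : AB
  | b : AB
deriving DecidableEq

/-!
A word `w ∈ (ab)^*` is alternating, so embedding `f` into it is forced letter by letter: read
greedily, each letter of `f` that matches the next letter of `w` is used as is, and each one
that does not costs one extra letter of `w`, which must come from `v`. For
`f = (b^B a^B a b)^n` this greedy embedding already uses `(4B + 2)n = |v| + |f|` letters, so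
there is no slack: every letter of `w` not used by `f` is forced, and they spell
`(a^B b^B)^n`. Conversely `a^B b^B ⧢ b^B a^B a b` contains `(ab)^(2B+1)`.
-/

section Words

variable {α : Type*}

@[simp] theorem shuffle_nil_left (v : List α) : shuffle [] v = {v} := by
  cases v <;> simp [shuffle]

@[simp] theorem shuffle_nil_right (u : List α) : shuffle u [] = {u} := by
  cases u <;> simp [shuffle]

theorem shuffle_cons_cons (x y : α) (u v : List α) :
    shuffle (x :: u) (y :: v) =
      List.cons x '' shuffle u (y :: v) ∪ List.cons y '' shuffle (x :: u) v := by
  simp [shuffle]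

@[simp] theorem nil_mem_shuffle_iff {u v : List α} : [] ∈ shuffle u v ↔ u = [] ∧ v = [] := by
  cases u <;> cases v <;> simp [shuffle_cons_cons, eq_comm]

theorem cons_mem_shuffle_iff {x : α} {w u v : List α} :
    x :: w ∈ shuffle u v ↔
      (∃ u', u = x :: u' ∧ w ∈ shuffle u' v) ∨ (∃ v', v = x :: v' ∧ w ∈ shuffle u v') := by
  cases u <;> cases v <;> simp [shuffle_cons_cons, eq_comm, and_comm]

theorem length_of_mem_shuffle {w u v : List α} (h : w ∈ shuffle u v) :
    w.length = u.length + v.length := by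
  induction w generalizing u v with
  | nil => simp_all
  | cons x w ih =>
    rcases cons_mem_shuffle_iff.mp h with ⟨u, rfl, hw⟩ | ⟨v, rfl, hw⟩ <;>
      simp only [ih hw, List.length_cons] <;> omega

theorem sublist_of_mem_shuffle {w u v : List α} (h : w ∈ shuffle u v) : v.Sublist w := by
  induction w generalizing u v with
  | nil => simp_all
  | cons x w ih =>
    rcases cons_mem_shuffle_iff.mp h with ⟨u, rfl, hw⟩ | ⟨v, rfl, hw⟩
    · exact (ih hw).cons x
    · exact (ih hw).cons_cons x

theorem mem_shuffle_comm {w u v : List α} (h : w ∈ shuffle u v) : w ∈ shuffle v u := by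
  induction w generalizing u v with
  | nil => simp_all
  | cons x w ih =>
    rcases cons_mem_shuffle_iff.mp h with ⟨u, rfl, hw⟩ | ⟨v, rfl, hw⟩
    · exact cons_mem_shuffle_iff.mpr (.inr ⟨u, rfl, ih hw⟩)
    · exact cons_mem_shuffle_iff.mpr (.inl ⟨v, rfl, ih hw⟩)

theorem cons_mem_shuffle_cons_left {x : α} {w u v : List α} (h : w ∈ shuffle u v) :
    x :: w ∈ shuffle (x :: u) v :=
  cons_mem_shuffle_iff.mpr (.inl ⟨u, rfl, h⟩)

theorem cons_mem_shuffle_cons_right {x : α} {w u v : List α} (h : w ∈ shuffle u v) :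
    x :: w ∈ shuffle u (x :: v) :=
  cons_mem_shuffle_iff.mpr (.inr ⟨v, rfl, h⟩)

theorem append_mem_shuffle_append {w₁ w₂ u₁ u₂ v₁ v₂ : List α}
    (h₁ : w₁ ∈ shuffle u₁ v₁) (h₂ : w₂ ∈ shuffle u₂ v₂) :
    w₁ ++ w₂ ∈ shuffle (u₁ ++ u₂) (v₁ ++ v₂) := by
  induction w₁ generalizing u₁ v₁ with
  | nil => simp_all
  | cons x w ih =>
    rcases cons_mem_shuffle_iff.mp h₁ with ⟨u, rfl, hw⟩ | ⟨v, rfl, hw⟩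
    · exact cons_mem_shuffle_cons_left (ih hw)
    · exact cons_mem_shuffle_cons_right (ih hw)

theorem wpow_add (u : List α) (m n : ℕ) : wpow u (m + n) = wpow u m ++ wpow u n := by
  induction m with
  | zero => simp [wpow]
  | succ m ih => rw [Nat.add_right_comm, wpow, wpow, ih, List.append_assoc]

theorem wpow_mul (u : List α) (m n : ℕ) : wpow u (m * n) = wpow (wpow u m) n := by
  induction n with
  | zero => rfl
  | succ n ih => rw [Nat.mul_succ, Nat.add_comm, wpow_add, ih, wpow]

theorem length_wpow (u : List α) (n : ℕ) : (wpow u n).length = n * u.length := by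
  induction n with
  | zero => simp [wpow]
  | succ n ih => simp [wpow, ih, Nat.succ_mul, Nat.add_comm]

theorem wpow_mem_shuffle_wpow {w u v : List α} (h : w ∈ shuffle u v) (n : ℕ) :
    wpow w n ∈ shuffle (wpow u n) (wpow v n) := by
  induction n with
  | zero => simp [wpow]
  | succ n ih => exact append_mem_shuffle_append h ih

theorem wpow_pair_mem_shuffle_replicate (x y : α) (k : ℕ) :
    wpow [x, y] k ∈ shuffle (List.replicate k x) (List.replicate k y) := by
  induction k with
  | zero => simp [wpow]
  | succ k ih => exact cons_mem_shuffle_cons_left (cons_mem_shuffle_cons_right ih)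

theorem replicate_append_cons_self (k : ℕ) (x : α) (l : List α) :
    List.replicate k x ++ x :: l = x :: (List.replicate k x ++ l) := by
  rw [← List.singleton_append, ← List.append_assoc, ← List.replicate_succ', List.replicate_succ,
    List.cons_append]

end Words

namespace AB

def swap : AB → AB
  | a => b
  | b => a

@[simp] theorem swap_swap (p : AB) : p.swap.swap = p := by cases p <;> rfl

@[simp] theorem swap_a : a.swap = b := rfl

@[simp] theorem swap_b : b.swap = a := rfl

@[simp] theorem swap_ne (p : AB) : p.swap ≠ p := by cases p <;> decide

@[simp] theorem ne_swap (p : AB) : p ≠ p.swap := (swap_ne p).symm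

theorem eq_swap_of_ne {c p : AB} (h : c ≠ p) : c = p.swap := by
  cases c <;> cases p <;> simp_all [swap]

end AB

open AB

def Alternates : AB → List AB → Prop
  | _, [] => True
  | p, c :: w => c = p ∧ Alternates p.swap w

theorem alternates_wpow_ab (m : ℕ) : Alternates a (wpow [a, b] m) := by
  induction m with
  | zero => trivial
  | succ m ih => exact ⟨rfl, rfl, ih⟩

/-- The length of the shortest word `Alternates p` having `s` as a subword. -/
def altSpan : List AB → AB → ℕ
  | [], _ => 0
  | c :: s, p => if c = p then 1 + altSpan s p.swap else 2 + altSpan s p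

/-- The letters of that shortest word left out by the greedy embedding of `s`. -/
def altGaps : List AB → AB → List AB
  | [], _ => []
  | c :: s, p => if c = p then altGaps s p.swap else p :: altGaps s p

theorem altSpan_swap_le (s : List AB) (p : AB) : altSpan s p.swap ≤ 1 + altSpan s p := by
  cases s with
  | nil => simp [altSpan]
  | cons c s => cases c <;> cases p <;> simp [altSpan, swap] <;> omega

theorem altSpan_le_length {w s : List AB} {p : AB} (hw : Alternates p w) (hs : s.Sublist w) :
    altSpan s p ≤ w.length := by
  induction w generalizing s p with
  | nil => simp_all [altSpan]
  | cons x w ih =>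
    obtain ⟨rfl, hw⟩ := hw
    cases hs with
    | cons _ hs =>
      have := altSpan_swap_le s x.swap
      rw [swap_swap] at this
      have := ih hw hs
      simp only [List.length_cons]
      omega
    | cons_cons _ hs =>
      have := ih hw hs
      simp only [altSpan, ↓reduceIte, List.length_cons]
      omega

theorem eq_altGaps_of_mem_shuffle {w v s : List AB} {p : AB} (h : w ∈ shuffle v s)
    (hw : Alternates p w) (hlen : w.length = altSpan s p) : v = altGaps s p := by
  induction w generalizing v s p with
  | nil =>
    obtain ⟨rfl, rfl⟩ := nil_mem_shuffle_iff.mp h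
    rfl
  | cons x w ih =>
    obtain ⟨rfl, hw⟩ := hw
    rcases cons_mem_shuffle_iff.mp h with ⟨v, rfl, hv⟩ | ⟨s, rfl, hs⟩
    · cases s with
      | nil => simp [altSpan] at hlen
      | cons c s =>
        by_cases hc : c = x
        · -- `x :: s` would have to embed into `w`, which has only `altSpan s x.swap` letters
          subst hc
          have := altSpan_le_length hw (sublist_of_mem_shuffle hv)
          simp only [altSpan, ne_swap, ↓reduceIte, List.length_cons] at this hlen
          omega
        · obtain rfl := eq_swap_of_ne hc
          have hv' := ih hv hw (by simp [altSpan] at hlen ⊢; omega)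
          simpa [altGaps] using hv'
    · simpa [altGaps] using ih hs hw (by simp [altSpan] at hlen; omega)

@[simp] theorem altSpan_replicate_swap_append (k : ℕ) (s : List AB) (p : AB) :
    altSpan (List.replicate k p.swap ++ s) p = 2 * k + altSpan s p := by
  induction k with
  | zero => simp
  | succ k ih =>
    simp only [List.replicate_succ, List.cons_append, altSpan, swap_ne, ↓reduceIte, ih]
    omega

@[simp] theorem altGaps_replicate_swap_append (k : ℕ) (s : List AB) (p : AB) :
    altGaps (List.replicate k p.swap ++ s) p = List.replicate k p ++ altGaps s p := by
  induction k with
  | zero => simp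
  | succ k ih => simp [List.replicate_succ, altGaps, ih]

section Block

variable (B : ℕ) (p : AB) (t : List AB)

theorem altSpan_block_append :
    altSpan (List.replicate B p.swap ++ List.replicate B p ++ [p, p.swap] ++ t) p
      = 4 * B + 2 + altSpan t p := by
  have h := altSpan_replicate_swap_append B (p.swap :: t) p.swap
  simp only [List.append_assoc, List.cons_append, List.nil_append, replicate_append_cons_self,
    altSpan_replicate_swap_append]
  simp only [swap_swap] at h
  simp only [altSpan, ↓reduceIte, h, swap_swap]
  omega

theorem altGaps_block_append :
    altGaps (List.replicate B p.swap ++ List.replicate B p ++ [p, p.swap] ++ t) p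
      = List.replicate B p ++ List.replicate B p.swap ++ altGaps t p := by
  have h := altGaps_replicate_swap_append B (p.swap :: t) p.swap
  simp only [List.append_assoc, List.cons_append, List.nil_append, replicate_append_cons_self,
    altGaps_replicate_swap_append]
  simp only [swap_swap] at h
  simp [altGaps, h]

theorem wpow_pair_mem_shuffle_block :
    wpow [p, p.swap] (2 * B + 1) ∈
      shuffle (List.replicate B p ++ List.replicate B p.swap)
        (List.replicate B p.swap ++ List.replicate B p ++ [p, p.swap]) := by
  have hpair := wpow_pair_mem_shuffle_replicate p p.swap B
  have hlast : [p, p.swap] ∈ shuffle [] [p, p.swap] := by simp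
  have := append_mem_shuffle_append hpair
    (append_mem_shuffle_append (mem_shuffle_comm hpair) hlast)
  rw [two_mul, wpow_add, wpow_add]
  simpa [wpow] using this

variable (n : ℕ)

theorem altSpan_wpow_block :
    altSpan (wpow (List.replicate B p.swap ++ List.replicate B p ++ [p, p.swap]) n) p
      = (4 * B + 2) * n := by
  induction n with
  | zero => rfl
  | succ n ih => rw [wpow, altSpan_block_append, ih, Nat.mul_succ, Nat.add_comm]

theorem altGaps_wpow_block :
    altGaps (wpow (List.replicate B p.swap ++ List.replicate B p ++ [p, p.swap]) n) p
      = wpow (List.replicate B p ++ List.replicate B p.swap) n := by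
  induction n with
  | zero => rfl
  | succ n ih => rw [wpow, altGaps_block_append, ih, wpow]

end Block

theorem stmt3_general (B n : ℕ)
    (f : List AB)
    (hf : f = wpow (List.replicate B AB.b ++ List.replicate B AB.a ++ [AB.a, AB.b]) n) :
    ∀ v : List AB, v.length = 2 * B * n →
      ((shuffle v f ∩ star [AB.a, AB.b]).Nonempty ↔
        v = wpow (List.replicate B AB.a ++ List.replicate B AB.b) n) := by
  have hspan := altSpan_wpow_block B a n
  have hgaps := altGaps_wpow_block B a n
  simp only [swap_a] at hspan hgaps
  subst hf
  intro v hv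
  constructor
  · rintro ⟨w, hw, m, rfl⟩
    refine hgaps ▸ eq_altGaps_of_mem_shuffle hw (alternates_wpow_ab m) ?_
    rw [length_of_mem_shuffle hw, hv, length_wpow, hspan]
    simp only [List.length_append, List.length_replicate, List.length_cons, List.length_nil]
    ring
  · rintro rfl
    exact ⟨_, wpow_mem_shuffle_wpow (wpow_pair_mem_shuffle_block B a) n, _,
      (wpow_mul _ _ _).symm⟩

/-- with `f = (b^B a^B a b)^n`, for every word `v` of length `2Bn`,
`(v ⧢ f) ∩ (ab)^* ≠ ∅` iff `v = (a^B b^B)^n`. -/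
theorem stmt3 (B n : ℕ) (hB : 1 ≤ B)
    (f : List AB)
    (hf : f = wpow (List.replicate B AB.b ++ List.replicate B AB.a ++ [AB.a, AB.b]) n) :
    ∀ v : List AB, v.length = 2 * B * n →
      ((shuffle v f ∩ star [AB.a, AB.b]).Nonempty ↔
        v = wpow (List.replicate B AB.a ++ List.replicate B AB.b) n) :=
  stmt3_general B n f hf

end CTS
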